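/- Kernel intersection decomposition for two factors: Let {ρ¹_j}_{j∈[ℓ₁]} and {ρ²_j}_{j∈[ℓ₂]} be linear operators on finite-dimensional inner product spaces H₁, H₂ such that the ranges of {ρⁱ_j}_j span Hᵢ for i=1,2. Fix (x₁, x₂). Then ⋂_{(y₁,y₂)≠(x₁,x₂)} ker(ρ¹_{y₁} ⊗ ρ²_{y₂}) = (⋂_{j≠x₁} ker(ρ¹_j)) ⊗ (⋂_{j≠x₂} ker(ρ²_j)). -/

import Mathlib

/-!
Let `v` be killed by every `ρ₁ y₁ ⊗ ρ₂ y₂` with `(y₁, y₂) ≠ (x₁, x₂)`. For `y₁ ≠ x₁` the vector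
`(ρ₁ y₁ ⊗ 1) v` is then killed by every `1 ⊗ ρ₂ j`; the `ρ₂ j` are Hermitian with ranges spanning
the space, so their kernels meet only in `0`, and `(ρ₁ y₁ ⊗ 1) v = 0`: every column of `v` lies in
`ker ρ₁ y₁`. Symmetrically every row of `v` lies in `⋂_{y₂ ≠ x₂} ker ρ₂ y₂`, and a tensor whose
columns lie in `U` and whose rows lie in `W` lies in `U ⊗ W`. The reverse inclusion is checked on
pure tensors.
-/

open Matrix Kronecker ComplexOrder

/-- The subspace of `(Fin d₁ × Fin d₂) → ℂ` spanned by pure (Kronecker) tensors with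
components in `U` and `W`. -/
noncomputable def tensorSub {d₁ d₂ : ℕ} (U : Submodule ℂ (Fin d₁ → ℂ)) (W : Submodule ℂ (Fin d₂ → ℂ)) :
    Submodule ℂ (Fin d₁ × Fin d₂ → ℂ) :=
  Submodule.span ℂ
    {x | ∃ u ∈ U, ∃ w ∈ W, x = fun p : Fin d₁ × Fin d₂ => u p.1 * w p.2}

namespace Matrix

section Kronecker

variable {R m n : Type*} [CommSemiring R] [Fintype m] [Fintype n]

theorem kronecker_mulVec_tmul (A : Matrix m m R) (B : Matrix n n R) (u : m → R) (w : n → R) :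
    (A ⊗ₖ B) *ᵥ (fun pq => u pq.1 * w pq.2) = fun pq => (A *ᵥ u) pq.1 * (B *ᵥ w) pq.2 := by
  ext ⟨p, q⟩
  simp only [mulVec, dotProduct, kroneckerMap_apply, Fintype.sum_prod_type, Finset.sum_mul_sum]
  exact Finset.sum_congr rfl fun _ _ => Finset.sum_congr rfl fun _ _ => by ring

theorem kronecker_one_mulVec_apply [DecidableEq n] (A : Matrix m m R) (v : m × n → R)
    (p : m) (q : n) :
    ((A ⊗ₖ (1 : Matrix n n R)) *ᵥ v) (p, q) = (A *ᵥ fun p' => v (p', q)) p := by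
  simp [mulVec, dotProduct, Fintype.sum_prod_type, one_apply]

theorem one_kronecker_mulVec_apply [DecidableEq m] (B : Matrix n n R) (v : m × n → R)
    (p : m) (q : n) :
    (((1 : Matrix m m R) ⊗ₖ B) *ᵥ v) (p, q) = (B *ᵥ fun q' => v (p, q')) q := by
  simp [mulVec, dotProduct, Fintype.sum_prod_type, one_apply]

end Kronecker

section Hermitian

variable {𝕜 n ι : Type*} [RCLike 𝕜] [Fintype n]

theorem IsHermitian.eq_zero_of_forall_mulVec_eq_zero {ρ : ι → Matrix n n 𝕜}
    (hρ : ∀ j, (ρ j).IsHermitian) (hspan : (⨆ j, LinearMap.range (ρ j).mulVecLin) = ⊤)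
    {x : n → 𝕜} (hx : ∀ j, ρ j *ᵥ x = 0) : x = 0 := by
  -- `x` is orthogonal to every range, hence to the whole space, hence to itself.
  have hx_orth : ∀ j, star x ᵥ* ρ j = 0 := fun j => by
    rw [← (hρ j).eq, ← star_mulVec, hx j, star_zero]
  refine dotProduct_star_self_eq_zero.mp <|
    Submodule.iSup_induction _ (motive := fun y => star x ⬝ᵥ y = 0) (hspan ▸ Submodule.mem_top)
      ?_ (dotProduct_zero _) fun y z hy hz => by rw [dotProduct_add, hy, hz, add_zero]
  rintro j _ ⟨u, rfl⟩
  rw [mulVecLin_apply, dotProduct_mulVec, hx_orth j, zero_dotProduct]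

end Hermitian

section KroneckerKernel

variable {𝕜 m n ι : Type*} [RCLike 𝕜] [Fintype m] [Fintype n]

theorem eq_zero_of_forall_one_kronecker_mulVec_eq_zero [DecidableEq m] {B : ι → Matrix n n 𝕜}
    (hB : ∀ j, (B j).IsHermitian) (hspan : (⨆ j, LinearMap.range (B j).mulVecLin) = ⊤)
    {w : m × n → 𝕜} (hw : ∀ j, ((1 : Matrix m m 𝕜) ⊗ₖ B j) *ᵥ w = 0) : w = 0 := by
  ext ⟨p, q⟩
  have hrow : (fun q' => w (p, q')) = 0 := IsHermitian.eq_zero_of_forall_mulVec_eq_zero hB hspan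
    fun j => funext fun q => by rw [← one_kronecker_mulVec_apply, hw j]; rfl
  exact congrFun hrow q

theorem eq_zero_of_forall_kronecker_one_mulVec_eq_zero [DecidableEq n] {A : ι → Matrix m m 𝕜}
    (hA : ∀ j, (A j).IsHermitian) (hspan : (⨆ j, LinearMap.range (A j).mulVecLin) = ⊤)
    {w : m × n → 𝕜} (hw : ∀ j, (A j ⊗ₖ (1 : Matrix n n 𝕜)) *ᵥ w = 0) : w = 0 := by
  ext ⟨p, q⟩
  have hcol : (fun p' => w (p', q)) = 0 := IsHermitian.eq_zero_of_forall_mulVec_eq_zero hA hspan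
    fun j => funext fun p => by rw [← kronecker_one_mulVec_apply, hw j]; rfl
  exact congrFun hcol p

theorem mulVec_col_eq_zero_of_forall_kronecker_mulVec_eq_zero [DecidableEq m] [DecidableEq n]
    {B : ι → Matrix n n 𝕜}
    (hB : ∀ j, (B j).IsHermitian) (hspan : (⨆ j, LinearMap.range (B j).mulVecLin) = ⊤)
    {A : Matrix m m 𝕜} {v : m × n → 𝕜} (hv : ∀ j, (A ⊗ₖ B j) *ᵥ v = 0) (q : n) :
    A *ᵥ (fun p => v (p, q)) = 0 := by
  have h : (A ⊗ₖ (1 : Matrix n n 𝕜)) *ᵥ v = 0 :=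
    eq_zero_of_forall_one_kronecker_mulVec_eq_zero hB hspan fun j => by
      rw [mulVec_mulVec, ← mul_kronecker_mul, Matrix.one_mul, Matrix.mul_one, hv j]
  funext p
  rw [← kronecker_one_mulVec_apply, h]
  rfl

theorem mulVec_row_eq_zero_of_forall_kronecker_mulVec_eq_zero [DecidableEq m] [DecidableEq n]
    {A : ι → Matrix m m 𝕜}
    (hA : ∀ j, (A j).IsHermitian) (hspan : (⨆ j, LinearMap.range (A j).mulVecLin) = ⊤)
    {B : Matrix n n 𝕜} {v : m × n → 𝕜} (hv : ∀ j, (A j ⊗ₖ B) *ᵥ v = 0) (p : m) :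
    B *ᵥ (fun q => v (p, q)) = 0 := by
  have h : ((1 : Matrix m m 𝕜) ⊗ₖ B) *ᵥ v = 0 :=
    eq_zero_of_forall_kronecker_one_mulVec_eq_zero hA hspan fun j => by
      rw [mulVec_mulVec, ← mul_kronecker_mul, Matrix.one_mul, Matrix.mul_one, hv j]
  funext q
  rw [← one_kronecker_mulVec_apply, h]
  rfl

end KroneckerKernel

end Matrix

section TensorSub

variable {d₁ d₂ : ℕ} {U : Submodule ℂ (Fin d₁ → ℂ)} {W : Submodule ℂ (Fin d₂ → ℂ)}

theorem tensorSub_le_ker_kronecker {A : Matrix (Fin d₁) (Fin d₁) ℂ}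
    {B : Matrix (Fin d₂) (Fin d₂) ℂ}
    (h : U ≤ LinearMap.ker A.mulVecLin ∨ W ≤ LinearMap.ker B.mulVecLin) :
    tensorSub U W ≤ LinearMap.ker (A ⊗ₖ B).mulVecLin := by
  refine Submodule.span_le.mpr ?_
  rintro _ ⟨u, hu, w, hw, rfl⟩
  change (A ⊗ₖ B) *ᵥ _ = 0
  rw [kronecker_mulVec_tmul]
  ext
  rcases h with hU | hW
  · simp [show A *ᵥ u = 0 from hU hu]
  · simp [show B *ᵥ w = 0 from hW hw]

/-- Split `v` along its columns with a left inverse `P` of `U ↪ ℂ^d₁`: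
`v = ∑ p, P (e p) ⊗ (row p of v)`. -/
theorem mem_tensorSub_of_forall_mem {v : Fin d₁ × Fin d₂ → ℂ}
    (hcol : ∀ q, (fun p => v (p, q)) ∈ U) (hrow : ∀ p, (fun q => v (p, q)) ∈ W) :
    v ∈ tensorSub U W := by
  classical
  obtain ⟨P, hP⟩ := U.subtype.exists_leftInverse_of_injective U.ker_subtype
  have hcol_eq :
      ∀ q, (fun p => v (p, q)) = ∑ p, v (p, q) • (P (Pi.single p 1) : Fin d₁ → ℂ) := by
    intro q
    have := congrArg Subtype.val (LinearMap.congr_fun hP ⟨_, hcol q⟩)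
    simp only [LinearMap.comp_apply, Submodule.subtype_apply, LinearMap.id_apply] at this
    conv_lhs => rw [← this, pi_eq_sum_univ' (fun p => v (p, q))]
    simp
  have hv : v = ∑ p, fun pq : Fin d₁ × Fin d₂ =>
      (P (Pi.single p 1) : Fin d₁ → ℂ) pq.1 * v (p, pq.2) := by
    ext ⟨p', q⟩
    have := congrFun (hcol_eq q) p'
    simp only [Finset.sum_apply, Pi.smul_apply, smul_eq_mul] at this ⊢
    rw [this]
    exact Finset.sum_congr rfl fun _ _ => mul_comm _ _
  rw [hv]
  exact Submodule.sum_mem _ fun p _ => Submodule.subset_span ⟨_, (P _).2, _, hrow p, rfl⟩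

end TensorSub

theorem kernel_intersection_decomposition {d₁ d₂ ℓ₁ ℓ₂ : ℕ}
    (ρ₁ : Fin ℓ₁ → Matrix (Fin d₁) (Fin d₁) ℂ)
    (ρ₂ : Fin ℓ₂ → Matrix (Fin d₂) (Fin d₂) ℂ)
    (hρ₁ : ∀ j, (ρ₁ j).PosSemidef) (hρ₂ : ∀ j, (ρ₂ j).PosSemidef)
    (hspan₁ : (⨆ j, LinearMap.range (ρ₁ j).mulVecLin) = ⊤)
    (hspan₂ : (⨆ j, LinearMap.range (ρ₂ j).mulVecLin) = ⊤)
    (x₁ : Fin ℓ₁) (x₂ : Fin ℓ₂) :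
    (⨅ p : {p : Fin ℓ₁ × Fin ℓ₂ // p ≠ (x₁, x₂)},
        LinearMap.ker ((ρ₁ p.1.1 ⊗ₖ ρ₂ p.1.2)).mulVecLin)
      = tensorSub
          (⨅ j : {j : Fin ℓ₁ // j ≠ x₁}, LinearMap.ker (ρ₁ j.1).mulVecLin)
          (⨅ j : {j : Fin ℓ₂ // j ≠ x₂}, LinearMap.ker (ρ₂ j.1).mulVecLin) := by
  apply le_antisymm
  · intro v hv
    have hker : ∀ y₁ y₂, (y₁, y₂) ≠ (x₁, x₂) → (ρ₁ y₁ ⊗ₖ ρ₂ y₂) *ᵥ v = 0 :=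
      fun y₁ y₂ hy => (Submodule.mem_iInf _).mp hv ⟨(y₁, y₂), hy⟩
    refine mem_tensorSub_of_forall_mem (fun q => ?_) (fun p => ?_) <;>
      refine (Submodule.mem_iInf _).mpr fun ⟨j, hj⟩ => ?_
    · exact mulVec_col_eq_zero_of_forall_kronecker_mulVec_eq_zero (fun k => (hρ₂ k).isHermitian)
        hspan₂ (fun k => hker j k (by simp [hj])) q
    · exact mulVec_row_eq_zero_of_forall_kronecker_mulVec_eq_zero (fun k => (hρ₁ k).isHermitian)
        hspan₁ (fun k => hker k j (by simp [hj])) p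
  · refine le_iInf fun ⟨(y₁, y₂), hy⟩ => tensorSub_le_ker_kronecker ?_
    by_cases h₁ : y₁ = x₁
    · exact .inr (iInf_le_of_le ⟨y₂, fun h₂ => hy (by rw [h₁, h₂])⟩ le_rfl)
    · exact .inl (iInf_le_of_le ⟨y₁, h₁⟩ le_rfl)
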